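/- Let Φ1 be a state, suppose the type 3 move T3^{ij} is valid for Φ1 and the type 2 move T2^k, with k ≠ j, is invalid for T3^{ij}(Φ1). Then, after swapping the two moves, it is not possible that both are invalid: either T2^k is valid for Φ1, or T3^{ij} is valid for T2^k(Φ1). -/

import Mathlib

namespace CPaper


/-- The six types of moves on states (all indices 0-based). -/
inductive Move where
  | t1 (d : ℕ)
  | t2 (i : ℕ)
  | t3 (i j : ℕ)
  | t4 (i j : ℕ)
  | t5 (i j : ℕ)
  | t6 (i j : ℕ)

/-- A state is a list of tuples of integers. -/
abbrev State := List (List ℤ)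

/-- A genuine state: at least one tuple, and all tuples nonempty. -/
def IsState (Φ : State) : Prop := Φ ≠ [] ∧ ∀ t ∈ Φ, t ≠ []

/-- The entries of a state, read in order (flattened). -/
def entries (Φ : State) : List ℤ := Φ.flatten

/-- The number of positions of a state. -/
def numPos (Φ : State) : ℕ := (entries Φ).length

/-- The value at the (0-based) position `i` of the state `Φ`. -/
def entry (Φ : State) (i : ℕ) : ℤ := (entries Φ).getD i 0

/-- The (0-based) index of the tuple containing the flat position `i`. -/
def tupleIdx : State → ℕ → ℕ
  | [], _ => 0
  | t :: ts, i => if i < t.length then 0 else tupleIdx ts (i - t.length) + 1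

/-- Positions `i` and `j` lie in the same tuple of `Φ`. -/
def SameTuple (Φ : State) (i j : ℕ) : Prop := tupleIdx Φ i = tupleIdx Φ j

/-- Position `i` is dominant in `Φ`: its value bounds the absolute value of
every entry of the tuple containing it. -/
def DominantAt (Φ : State) (i : ℕ) : Prop :=
  ∀ k, k < numPos Φ → SameTuple Φ i k → |entry Φ k| ≤ entry Φ i

/-- Apply `f` at flat position `i`, preserving the tuple structure. -/
def modifyFlat (f : ℤ → ℤ) : ℕ → State → State
  | _, [] => []
  | i, t :: ts =>
    if i < t.length then (t.take i ++ f (t.getD i 0) :: t.drop (i + 1)) :: ts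
    else t :: modifyFlat f (i - t.length) ts

/-- Concatenate the `d`-th and `(d+1)`-th tuples of `Φ` (0-based). -/
def joinAt (Φ : State) (d : ℕ) : State :=
  Φ.take d ++ (Φ.getD d [] ++ Φ.getD (d + 1) []) :: Φ.drop (d + 2)

/-- The action of a move on a state. -/
def Move.apply : Move → State → State
  | .t1 d, Φ => joinAt Φ d
  | .t2 i, Φ => modifyFlat (· + 1) i Φ
  | .t3 i j, Φ => modifyFlat (· - 1) j (modifyFlat (· + 1) i Φ)
  | .t4 i j, Φ => modifyFlat (· - 1) j (modifyFlat (· + 1) i Φ)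
  | .t5 i j, Φ => modifyFlat (· + 1) j (modifyFlat (· + 1) i Φ)
  | .t6 i j, Φ => modifyFlat (· + 1) j (modifyFlat (· + 1) i Φ)

/-- A move is admissible for `Φ` when its indices are within bounds. -/
def Move.Admissible : Move → State → Prop
  | .t1 d, Φ => d + 1 < Φ.length
  | .t2 i, Φ => i < numPos Φ
  | .t3 i j, Φ => i < numPos Φ ∧ j < numPos Φ ∧ i ≠ j
  | .t4 i j, Φ => i < numPos Φ ∧ j < numPos Φ ∧ i ≠ j
  | .t5 i j, Φ => i < numPos Φ ∧ j < numPos Φ ∧ i ≠ j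
  | .t6 i j, Φ => i < numPos Φ ∧ j < numPos Φ ∧ i ≠ j

/-- Validity of a move for a state. -/
def Move.Valid : Move → State → Prop
  | .t1 d, Φ => d + 1 < Φ.length
  | .t2 i, Φ => i < numPos Φ ∧ DominantAt Φ i
  | .t3 i j, Φ =>
      i < numPos Φ ∧ j < numPos Φ ∧ i ≠ j ∧ SameTuple Φ i j ∧ DominantAt Φ i ∧ entry Φ j ≤ 0
  | .t4 i j, Φ =>
      i < numPos Φ ∧ j < numPos Φ ∧ i ≠ j ∧ SameTuple Φ i j ∧ DominantAt Φ i ∧ 0 < entry Φ j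
  | .t5 i j, Φ =>
      i < numPos Φ ∧ j < numPos Φ ∧ i ≠ j ∧ SameTuple Φ i j ∧ DominantAt Φ i ∧ entry Φ j < 0
  | .t6 i j, Φ =>
      i < numPos Φ ∧ j < numPos Φ ∧ i ≠ j ∧ SameTuple Φ i j ∧ DominantAt Φ i ∧ 0 ≤ entry Φ j

def Move.isType1 : Move → Prop
  | .t1 _ => True
  | _ => False

def Move.isType2 : Move → Prop
  | .t2 _ => True
  | _ => False

def Move.isType3 : Move → Prop
  | .t3 _ _ => True
  | _ => False

/-- The move is of one of the types 1, 2 or 3. -/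
def Move.isType123 : Move → Prop
  | .t1 _ => True
  | .t2 _ => True
  | .t3 _ _ => True
  | _ => False

/-- `ValidSeq ms Φ Ψ`: the list of moves `ms`, applied in order starting from `Φ`,
consists of valid moves and ends at `Ψ`. -/
def ValidSeq : List Move → State → State → Prop
  | [], Φ, Ψ => Φ = Ψ
  | m :: ms, Φ, Ψ => m.Valid Φ ∧ ValidSeq ms (m.apply Φ) Ψ

/-- A tuple of integers is C*_{Z,6}-realizable: the one-tuple state `[l]` is reachable
from `((0),...,(0))` by a finite sequence of valid moves of types 1–6. -/
def CStarZ6 (l : List ℤ) : Prop :=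
  ∃ ms : List Move, ValidSeq ms (List.replicate l.length ([0] : List ℤ)) [l]

/-- A tuple of integers is C*_{Z,3}-realizable: the one-tuple state `[l]` is reachable
from `((0),...,(0))` by a finite sequence of valid moves of types 1, 2 and 3. -/
def CStarZ3 (l : List ℤ) : Prop :=
  ∃ ms : List Move, (∀ m ∈ ms, m.isType123) ∧
    ValidSeq ms (List.replicate l.length ([0] : List ℤ)) [l]

/-!
Either `k` lies in the tuple of `i` with `Φ[k] ≥ Φ[i]`, and then `k` inherits the dominance
of `i`, so `T2^k` is valid for `Φ`; or `Φ[k] + 1 ≤ Φ[i]` whenever `k` is in that tuple, so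
raising `Φ[k]` keeps `i` dominant, and since `k ≠ j` the condition `Φ[j] ≤ 0` is untouched:
`T3^{ij}` stays valid after `T2^k`.
-/

theorem _root_.List.modify_append_of_lt {α : Type*} (f : α → α) {i : ℕ} {t : List α}
    (r : List α) (h : i < t.length) : (t ++ r).modify i f = t.modify i f ++ r := by
  induction t generalizing i with
  | nil => simp at h
  | cons a t ih =>
    cases i with
    | zero => simp
    | succ i => simp [ih (by simpa using h)]

theorem _root_.List.modify_append_of_le {α : Type*} (f : α → α) {i : ℕ} {t : List α}
    (r : List α) (h : t.length ≤ i) :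
    (t ++ r).modify i f = t ++ r.modify (i - t.length) f := by
  induction t generalizing i with
  | nil => simp
  | cons a t ih =>
    obtain ⟨i, rfl⟩ := Nat.exists_eq_add_of_le' (Nat.lt_of_lt_of_le (Nat.succ_pos _) h)
    simp [ih (by simpa using h)]

theorem entries_modifyFlat (f : ℤ → ℤ) :
    ∀ (i : ℕ) (Φ : State), entries (modifyFlat f i Φ) = (entries Φ).modify i f
  | _, [] => by simp [modifyFlat, entries]
  | i, t :: ts => by
    unfold modifyFlat
    split_ifs with h
    · simp [entries, List.modify_append_of_lt _ _ h, List.modify_eq_take_cons_drop h,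
        List.getElem?_eq_getElem h]
    · simp only [entries, List.flatten_cons, List.modify_append_of_le _ _ (not_lt.mp h)]
      exact congrArg (t ++ ·) (entries_modifyFlat f (i - t.length) ts)

theorem map_length_modifyFlat (f : ℤ → ℤ) :
    ∀ (i : ℕ) (Φ : State), (modifyFlat f i Φ).map List.length = Φ.map List.length
  | _, [] => rfl
  | i, t :: ts => by
    unfold modifyFlat
    split_ifs with h
    · simp only [List.map_cons, List.length_append, List.length_take, List.length_cons,
        List.length_drop]
      congr 1
      omega
    · simp [map_length_modifyFlat f (i - t.length) ts]

theorem tupleIdx_eq_of_map_length_eq :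
    ∀ {Φ Ψ : State}, Φ.map List.length = Ψ.map List.length → tupleIdx Φ = tupleIdx Ψ
  | [], [], _ => rfl
  | t :: ts, s :: ss, h => by
    simp only [List.map_cons, List.cons.injEq] at h
    funext i
    simp only [tupleIdx, h.1, tupleIdx_eq_of_map_length_eq h.2]

theorem tupleIdx_modifyFlat (f : ℤ → ℤ) (i : ℕ) (Φ : State) :
    tupleIdx (modifyFlat f i Φ) = tupleIdx Φ :=
  tupleIdx_eq_of_map_length_eq (map_length_modifyFlat f i Φ)

theorem sameTuple_modifyFlat (f : ℤ → ℤ) (i : ℕ) (Φ : State) :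
    SameTuple (modifyFlat f i Φ) = SameTuple Φ := by
  funext m m'
  simp only [SameTuple, tupleIdx_modifyFlat]

theorem numPos_modifyFlat (f : ℤ → ℤ) (i : ℕ) (Φ : State) :
    numPos (modifyFlat f i Φ) = numPos Φ := by
  simp [numPos, entries_modifyFlat]

theorem entry_modifyFlat_of_ne (f : ℤ → ℤ) (Φ : State) {i m : ℕ} (h : m ≠ i) :
    entry (modifyFlat f i Φ) m = entry Φ m := by
  simp [entry, entries_modifyFlat, List.getD_eq_getElem?_getD,
    List.getElem?_modify_ne _ _ (Ne.symm h)]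

theorem entry_modifyFlat_self (f : ℤ → ℤ) {Φ : State} {i : ℕ} (h : i < numPos Φ) :
    entry (modifyFlat f i Φ) i = f (entry Φ i) := by
  simp [entry, entries_modifyFlat, List.getD_eq_getElem?_getD, List.getElem?_modify_eq,
    List.getElem?_eq_getElem h]

theorem DominantAt.of_le {Φ : State} {i k : ℕ} (hi : DominantAt Φ i) (hik : SameTuple Φ i k)
    (hle : entry Φ i ≤ entry Φ k) : DominantAt Φ k :=
  fun m hm hkm => (hi m hm (hik.trans hkm)).trans hle

theorem DominantAt.modifyFlat_add_one {Φ : State} {i k : ℕ} (hi : DominantAt Φ i)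
    (hlt : SameTuple Φ i k → entry Φ k < entry Φ i) :
    DominantAt (modifyFlat (· + 1) k Φ) i := by
  have hki : k ≠ i := by
    rintro rfl
    exact (hlt rfl).false
  intro m hm him
  rw [numPos_modifyFlat] at hm
  rw [sameTuple_modifyFlat] at him
  rw [entry_modifyFlat_of_ne _ _ (Ne.symm hki)]
  obtain rfl | hmk := eq_or_ne m k
  · rw [entry_modifyFlat_self _ hm]
    have habs := abs_le.mp (hi m hm him)
    exact abs_le.mpr ⟨by omega, by linarith [hlt him]⟩
  · rw [entry_modifyFlat_of_ne _ _ hmk]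
    exact hi m hm him

theorem t3_valid_t2_apply {Φ : State} {i j k : ℕ} (hval : (Move.t3 i j).Valid Φ)
    (hkj : k ≠ j) (hlt : SameTuple Φ i k → entry Φ k < entry Φ i) :
    (Move.t3 i j).Valid ((Move.t2 k).apply Φ) := by
  obtain ⟨hi, hj, hij, hst, hdom, hj0⟩ := hval
  simp only [Move.Valid, Move.apply, numPos_modifyFlat, sameTuple_modifyFlat,
    entry_modifyFlat_of_ne _ _ (Ne.symm hkj)]
  exact ⟨hi, hj, hij, hst, hdom.modifyFlat_add_one hlt, hj0⟩

theorem T3_valid_T2_invalid_swap_general (Φ : State) (i j k : ℕ)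
    (hkj : k ≠ j)
    (hval : (Move.t3 i j).Valid Φ)
    (hadm : (Move.t2 k).Admissible ((Move.t3 i j).apply Φ)) :
    (Move.t2 k).Valid Φ ∨ (Move.t3 i j).Valid ((Move.t2 k).apply Φ) := by
  have hk : k < numPos Φ := by
    simpa only [Move.Admissible, Move.apply, numPos_modifyFlat] using hadm
  by_cases hdom : SameTuple Φ i k ∧ entry Φ i ≤ entry Φ k
  · exact Or.inl ⟨hk, hval.2.2.2.2.1.of_le hdom.1 hdom.2⟩
  · push Not at hdom
    exact Or.inr (t3_valid_t2_apply hval hkj hdom)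

/-- If a valid type 3 move `T3^{ij}` is followed by an invalid (admissible but not
valid) type 2 move `T2^k` with `k ≠ j`, then after the swap it is not possible
that both moves are invalid. -/
theorem T3_valid_T2_invalid_swap (Φ : State) (hΦ : IsState Φ) (i j k : ℕ)
    (hkj : k ≠ j)
    (hval : (Move.t3 i j).Valid Φ)
    (hadm : (Move.t2 k).Admissible ((Move.t3 i j).apply Φ))
    (hinv : ¬ (Move.t2 k).Valid ((Move.t3 i j).apply Φ)) :
    (Move.t2 k).Valid Φ ∨ (Move.t3 i j).Valid ((Move.t2 k).apply Φ) :=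
  T3_valid_T2_invalid_swap_general Φ i j k hkj hval hadm

end CPaper
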